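/- arXiv:1804.04025 — 3 statements merged into one kernel-verified Lean document; each statement's English description precedes it below -/
import Mathlib

section
/- If (c1, c2, S) is a Kempe component of a coloring σ of a graph G, then there are exactly |S| pairs (u, c) ∈ V(G) × [k] such that S = S_σ(u, c); consequently, the sum of |S| over all Kempe components S in the multiset K_σ equals k·n, where n = |V(G)|. -/
open scoped Classical

/-- One step of a `(c₁,c₂)`-alternating path: an edge whose endpoints receive the
colors `c₁` and `c₂` (in one of the two orders). -/
def altStep {V : Type*} {k : ℕ} (G : SimpleGraph V) (σ : V → Fin k) (c₁ c₂ : Fin k)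
    (x y : V) : Prop :=
  G.Adj x y ∧ ((σ x = c₁ ∧ σ y = c₂) ∨ (σ x = c₂ ∧ σ y = c₁))

/-- `S_σ(u,c)`: the set of vertices joined to `u` by a `(σ u, c)`-alternating path. -/
def kempeSet {V : Type*} {k : ℕ} (G : SimpleGraph V) (σ : V → Fin k) (u : V) (c : Fin k) :
    Set V :=
  {w | Relation.ReflTransGen (altStep G σ (σ u) c) u w}

/-- The Kempe component determined by `(u,c)`: the (unordered) pair of colors together
with the vertex set `S_σ(u,c)`. -/
noncomputable def kempeComp {V : Type*} {k : ℕ} (G : SimpleGraph V) (σ : V → Fin k)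
    (u : V) (c : Fin k) : Finset (Fin k) × Set V :=
  ({σ u, c}, kempeSet G σ u c)

/-!
The pairs `(v, d)` with `kempeComp v d = kempeComp u c` are exactly the vertices `v` of
`S = S_σ(u,c)`, each with the unique colour `d` completing `σ v` to the pair `{σ u, c}`:
the alternating-path relation is symmetric, so any vertex of `S` generates `S` again.
Hence the fibre over each component has `|S|` elements, and summing fibre sizes over the
distinct components counts every pair of `V × [k]` once.
-/

theorem Relation.ReflTransGen.setOf_eq_of_symm {α : Type*} {r : α → α → Prop} [Std.Symm r]
    {a b : α} (h : Relation.ReflTransGen r a b) :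
    {x | Relation.ReflTransGen r b x} = {x | Relation.ReflTransGen r a x} := by
  ext x
  exact ⟨h.trans, (Std.Symm.symm _ _ h).trans⟩

theorem Finset.sum_image_eq_card_of_ncard_fiber {α β : Type*} [Fintype α] [DecidableEq β]
    (f : α → β) (w : β → ℕ) (hw : ∀ a, {a' | f a' = f a}.ncard = w (f a)) :
    ∑ b ∈ Finset.univ.image f, w b = Fintype.card α := by
  rw [← Finset.card_univ, Finset.card_eq_sum_card_image f Finset.univ]
  refine Finset.sum_congr rfl fun b hb => ?_
  obtain ⟨a, -, rfl⟩ := Finset.mem_image.mp hb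
  rw [← hw, ← Set.ncard_coe_finset, Finset.coe_filter]
  simp only [Finset.mem_univ, true_and]

section Kempe

variable {V : Type*} {k : ℕ} (G : SimpleGraph V) (σ : V → Fin k)

instance altStep.instSymm (c₁ c₂ : Fin k) : Std.Symm (altStep G σ c₁ c₂) :=
  ⟨fun _ _ ⟨hadj, hcol⟩ => ⟨hadj.symm, by tauto⟩⟩

theorem altStep_comm (c₁ c₂ : Fin k) : altStep G σ c₁ c₂ = altStep G σ c₂ c₁ := by
  ext x y
  unfold altStep
  tauto

variable {G σ}

theorem mem_kempeSet_self (u : V) (c : Fin k) : u ∈ kempeSet G σ u c :=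
  Relation.ReflTransGen.refl

theorem color_of_mem_kempeSet {u v : V} {c : Fin k} (h : v ∈ kempeSet G σ u c) :
    σ v = σ u ∨ σ v = c := by
  induction h with
  | refl => exact Or.inl rfl
  | tail _ hstep _ => rcases hstep.2 with ⟨-, h⟩ | ⟨-, h⟩ <;> simp [h]

theorem kempeSet_eq_of_mem_of_color_eq_left {u v : V} {c : Fin k} (h : v ∈ kempeSet G σ u c)
    (hv : σ v = σ u) : kempeSet G σ v c = kempeSet G σ u c := by
  unfold kempeSet
  rw [hv]
  exact h.setOf_eq_of_symm

theorem kempeSet_eq_of_mem_of_color_eq_right {u v : V} {c : Fin k} (h : v ∈ kempeSet G σ u c)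
    (hv : σ v = c) : kempeSet G σ v (σ u) = kempeSet G σ u c := by
  unfold kempeSet
  rw [hv, altStep_comm]
  exact h.setOf_eq_of_symm

variable (σ) in
/-- The colour `d` with `{σ v, d} = {σ u, c}`, for `v` coloured `σ u` or `c`. -/
def otherColor (u : V) (c : Fin k) (v : V) : Fin k :=
  if σ v = σ u then c else σ u

theorem kempeComp_eq_iff {u v : V} {c d : Fin k} :
    kempeComp G σ v d = kempeComp G σ u c ↔
      v ∈ kempeSet G σ u c ∧ d = otherColor σ u c v := by
  unfold kempeComp otherColor
  constructor
  · intro h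
    obtain ⟨hpair, hset⟩ := Prod.mk.inj h
    have hv : v ∈ kempeSet G σ u c := hset ▸ mem_kempeSet_self v d
    rw [← Finset.coe_inj, Finset.coe_pair, Finset.coe_pair, Set.pair_eq_pair_iff] at hpair
    refine ⟨hv, ?_⟩
    split_ifs with hvu <;> grind
  · rintro ⟨hv, rfl⟩
    rcases em (σ v = σ u) with hvu | hvu
    · simp only [hvu, if_true, kempeSet_eq_of_mem_of_color_eq_left hv hvu]
    · have hvc := (color_of_mem_kempeSet hv).resolve_left hvu
      rw [if_neg hvu, kempeSet_eq_of_mem_of_color_eq_right hv hvc, hvc, Finset.pair_comm]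

theorem ncard_kempeComp_fiber (u : V) (c : Fin k) :
    {p : V × Fin k | kempeComp G σ p.1 p.2 = kempeComp G σ u c}.ncard
      = (kempeSet G σ u c).ncard := by
  have hfiber : {p : V × Fin k | kempeComp G σ p.1 p.2 = kempeComp G σ u c}
      = (fun v => (v, otherColor σ u c v)) '' kempeSet G σ u c := by
    ext ⟨v, d⟩
    simp only [Set.mem_ofPred_eq, kempeComp_eq_iff, Set.mem_image, Prod.mk.injEq]
    exact ⟨fun ⟨hv, hd⟩ => ⟨v, hv, rfl, hd.symm⟩,
      fun ⟨_, hv, rfl, hd⟩ => ⟨hv, hd.symm⟩⟩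
  rw [hfiber, Set.ncard_image_of_injective _ fun _ _ h => congrArg Prod.fst h]

end Kempe

/-- For any Kempe component `(c₁,c₂,S)` of `σ` there are exactly `|S|` pairs
`(u,c) ∈ V(G) × [k]` with `S = S_σ(u,c)` (as components, i.e. as color-pair/set pairs);
consequently the sum of `|S|` over the multiset `K_σ` of Kempe components is `k·n`. -/
theorem stmt0 {V : Type*} [Fintype V] (G : SimpleGraph V) (k : ℕ) (σ : V → Fin k) :
    (∀ (u : V) (c : Fin k),
      {p : V × Fin k | kempeComp G σ p.1 p.2 = kempeComp G σ u c}.ncard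
        = (kempeComp G σ u c).2.ncard) ∧
    ∑ K ∈ Finset.univ.image (fun p : V × Fin k => kempeComp G σ p.1 p.2), K.2.ncard
      = k * Fintype.card V := by
  refine ⟨ncard_kempeComp_fiber, ?_⟩
  calc _ = Fintype.card (V × Fin k) :=
        Finset.sum_image_eq_card_of_ncard_fiber _ (fun K : Finset (Fin k) × Set V => K.2.ncard)
          fun p => ncard_kempeComp_fiber p.1 p.2
    _ = k * Fintype.card V := by rw [Fintype.card_prod, Fintype.card_fin, mul_comm]
end

section
/- Any feasible solution of the reduced LP with p_3 = 1/6 and p_7 = 0 has objective κ ≥ 161/88. Hence κ* = 161/88 is optimal for the program (P*_red). -/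
/-- Any feasible solution of the reduced LP `(P*_red)` (with `p_3 = 1/6` and `p_7 = 0`)
has objective value `κ ≥ 161/88`; hence `κ* = 161/88` is optimal for `(P*_red)`. -/
theorem stmt8 (p : ℕ → ℝ) (κ : ℝ)
    (hcfg1 : ∀ i j : ℕ, 1 ≤ i → i ≤ 6 → 1 ≤ j → j ≤ 6 → j ≠ 1 →
      (i : ℝ) * (p i - p (i + 1)) + ((j : ℝ) - 1) * (p j - p (j + 1)) ≤ κ - 1)
    (hcfg2 : ∀ ℓ : ℕ, ℓ = 2 ∨ ℓ = 3 →
      2 * ((ℓ : ℝ) - 1) * p ℓ + p (2 * ℓ + 1) + 2 ≤ 2 * κ - 1)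
    (hmono : ∀ ℓ : ℕ, 1 ≤ ℓ → p (ℓ + 1) ≤ p ℓ)
    (hp1 : p 1 = 1) (hp3 : p 3 = 1/6) (hp7 : p 7 = 0)
    (hnn : ∀ ℓ : ℕ, 0 ≤ p ℓ) :
    161/88 ≤ κ := by
  have h12 := hcfg1 1 2 (by norm_num) (by norm_num) (by norm_num) (by norm_num) (by norm_num)
  have h13 := hcfg1 1 3 (by norm_num) (by norm_num) (by norm_num) (by norm_num) (by norm_num)
  have h14 := hcfg1 1 4 (by norm_num) (by norm_num) (by norm_num) (by norm_num) (by norm_num)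
  have h15 := hcfg1 1 5 (by norm_num) (by norm_num) (by norm_num) (by norm_num) (by norm_num)
  have h16 := hcfg1 1 6 (by norm_num) (by norm_num) (by norm_num) (by norm_num) (by norm_num)
  have h22 := hcfg1 2 2 (by norm_num) (by norm_num) (by norm_num) (by norm_num) (by norm_num)
  have h23 := hcfg1 2 3 (by norm_num) (by norm_num) (by norm_num) (by norm_num) (by norm_num)
  have h24 := hcfg1 2 4 (by norm_num) (by norm_num) (by norm_num) (by norm_num) (by norm_num)
  have h25 := hcfg1 2 5 (by norm_num) (by norm_num) (by norm_num) (by norm_num) (by norm_num)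
  have h26 := hcfg1 2 6 (by norm_num) (by norm_num) (by norm_num) (by norm_num) (by norm_num)
  have h32 := hcfg1 3 2 (by norm_num) (by norm_num) (by norm_num) (by norm_num) (by norm_num)
  have h33 := hcfg1 3 3 (by norm_num) (by norm_num) (by norm_num) (by norm_num) (by norm_num)
  have h34 := hcfg1 3 4 (by norm_num) (by norm_num) (by norm_num) (by norm_num) (by norm_num)
  have h35 := hcfg1 3 5 (by norm_num) (by norm_num) (by norm_num) (by norm_num) (by norm_num)
  have h36 := hcfg1 3 6 (by norm_num) (by norm_num) (by norm_num) (by norm_num) (by norm_num)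
  have h42 := hcfg1 4 2 (by norm_num) (by norm_num) (by norm_num) (by norm_num) (by norm_num)
  have h43 := hcfg1 4 3 (by norm_num) (by norm_num) (by norm_num) (by norm_num) (by norm_num)
  have h44 := hcfg1 4 4 (by norm_num) (by norm_num) (by norm_num) (by norm_num) (by norm_num)
  have h45 := hcfg1 4 5 (by norm_num) (by norm_num) (by norm_num) (by norm_num) (by norm_num)
  have h46 := hcfg1 4 6 (by norm_num) (by norm_num) (by norm_num) (by norm_num) (by norm_num)
  have h52 := hcfg1 5 2 (by norm_num) (by norm_num) (by norm_num) (by norm_num) (by norm_num)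
  have h53 := hcfg1 5 3 (by norm_num) (by norm_num) (by norm_num) (by norm_num) (by norm_num)
  have h54 := hcfg1 5 4 (by norm_num) (by norm_num) (by norm_num) (by norm_num) (by norm_num)
  have h55 := hcfg1 5 5 (by norm_num) (by norm_num) (by norm_num) (by norm_num) (by norm_num)
  have h56 := hcfg1 5 6 (by norm_num) (by norm_num) (by norm_num) (by norm_num) (by norm_num)
  have h62 := hcfg1 6 2 (by norm_num) (by norm_num) (by norm_num) (by norm_num) (by norm_num)
  have h63 := hcfg1 6 3 (by norm_num) (by norm_num) (by norm_num) (by norm_num) (by norm_num)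
  have h64 := hcfg1 6 4 (by norm_num) (by norm_num) (by norm_num) (by norm_num) (by norm_num)
  have h65 := hcfg1 6 5 (by norm_num) (by norm_num) (by norm_num) (by norm_num) (by norm_num)
  have h66 := hcfg1 6 6 (by norm_num) (by norm_num) (by norm_num) (by norm_num) (by norm_num)
  have g2 := hcfg2 2 (Or.inl rfl)
  have g3 := hcfg2 3 (Or.inr rfl)
  have m1 := hmono 1 (by norm_num)
  have m2 := hmono 2 (by norm_num)
  have m3 := hmono 3 (by norm_num)
  have m4 := hmono 4 (by norm_num)
  have m5 := hmono 5 (by norm_num)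
  have m6 := hmono 6 (by norm_num)
  have n2 := hnn 2
  have n4 := hnn 4
  have n5 := hnn 5
  have n6 := hnn 6
  norm_num at *
  linarith
end

section
/- (Lemma on r ≥ 3 configurations, arithmetic core) Let p = (p_ℓ) be flip parameters with i·p_i ≤ 1 and (i−1)·p_i ≤ 2p_3 for all i, p_1 + 2p_3 = 4/3 < κ, and (i−2)p_i < 1/4 − (3/2)(11/6 − κ) for all i. Then for all integers r ≥ 3 and all nonnegative integers a_1,…,a_r, b_1,…,b_r with a = 1 + Σa_i, b = 1 + Σb_i, a_max = max_i a_i ≥ 1 and b_max = max_i b_i ≥ 1: (a − 2a_max)·p_a + (b − 2b_max)·p_b + r(p_1 + 2p_3) < rκ − 1. -/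
/-- Arithmetic core of the lemma on `r ≥ 3` configurations: under the stated conditions
on the flip parameters `p` and on `κ`, for all `r ≥ 3` and nonnegative integers
`a_1,…,a_r, b_1,…,b_r` with `a = 1 + Σ a_i`, `b = 1 + Σ b_i` and
`a_max, b_max ≥ 1`, one has
`(a - 2a_max)·p_a + (b - 2b_max)·p_b + r(p_1 + 2p_3) < rκ - 1`. -/
theorem stmt9 (p : ℕ → ℝ) (κ : ℝ)
    (hp1 : p 1 = 1) (hmono : ∀ ℓ : ℕ, 1 ≤ ℓ → p (ℓ + 1) ≤ p ℓ) (hnn : ∀ ℓ : ℕ, 0 ≤ p ℓ)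
    (hκ : κ ≤ 11/6)
    (h1 : ∀ i : ℕ, 1 ≤ i → (i : ℝ) * p i ≤ 1)
    (h2 : ∀ i : ℕ, 1 ≤ i → ((i : ℝ) - 1) * p i ≤ 2 * p 3)
    (h3 : p 1 + 2 * p 3 = 4/3) (h4 : 4/3 < κ)
    (h5 : ∀ i : ℕ, 1 ≤ i → ((i : ℝ) - 2) * p i < 1/4 - (3/2) * (11/6 - κ))
    (r : ℕ) (hr : 3 ≤ r) (a b : Fin r → ℕ)
    (hamax : 1 ≤ Finset.univ.sup a) (hbmax : 1 ≤ Finset.univ.sup b) :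
    (((1 + ∑ i, a i : ℕ) : ℝ) - 2 * ((Finset.univ.sup a : ℕ) : ℝ)) * p (1 + ∑ i, a i)
      + (((1 + ∑ i, b i : ℕ) : ℝ) - 2 * ((Finset.univ.sup b : ℕ) : ℝ)) * p (1 + ∑ i, b i)
      + (r : ℝ) * (p 1 + 2 * p 3)
      < (r : ℝ) * κ - 1 := by
  have key : ∀ (c : Fin r → ℕ), 1 ≤ Finset.univ.sup c →
      (((1 + ∑ i, c i : ℕ) : ℝ) - 2 * ((Finset.univ.sup c : ℕ) : ℝ)) * p (1 + ∑ i, c i)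
        < 1/4 - (3/2) * (11/6 - κ) := by
    intro c hc
    set A := 1 + ∑ i, c i with hA
    have hA1 : 1 ≤ A := Nat.le_add_right 1 _
    have hmax : (1 : ℝ) ≤ ((Finset.univ.sup c : ℕ) : ℝ) := by exact_mod_cast hc
    have hfac : ((A : ℕ) : ℝ) - 2 * ((Finset.univ.sup c : ℕ) : ℝ) ≤ ((A : ℕ) : ℝ) - 2 := by
      linarith
    have := h5 A hA1
    nlinarith [hnn A, mul_le_mul_of_nonneg_right hfac (hnn A)]
  have ha := key a hamax
  have hb := key b hbmax
  have hrr : (3 : ℝ) ≤ (r : ℝ) := by exact_mod_cast hr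
  rw [h3]
  nlinarith [mul_nonneg (by linarith : (0:ℝ) ≤ (r:ℝ) - 3) (by linarith : (0:ℝ) ≤ κ - 4/3)]
end
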